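/- If W satisfies the minimal constraints and W·ln W and W² are integrable, then S[W] ≥ 1 + ln π − μ/2, where μ is the purity of W. -/
import Mathlib


open Real MeasureTheory

/-- If `W` satisfies the minimal constraints and `W·ln W` and `W²` are integrable, then
`S[W] ≥ 1 + ln π − μ/2`, where `μ = 2π ∫ W²` is the purity of `W`. -/
theorem wigner_entropy_B1 (W : ℝ × ℝ → ℝ) (hmeas : Measurable W)
    (hpos : ∀ z, 0 ≤ W z)
    (hnorm : ∫ z, W z = 1)
    (hbound : ∀ z, Real.pi * W z ≤ 1)
    (hlog : Integrable (fun z => W z * Real.log (W z)))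
    (hsq : Integrable (fun z => (W z) ^ 2)) :
    (-∫ z, W z * Real.log (W z))
      ≥ 1 + Real.log Real.pi - (2 * Real.pi * ∫ z, (W z) ^ 2) / 2 := by
  have hW : Integrable W := by
    by_contra h
    rw [show (∫ z, W z) = ∫ z, W z from rfl, integral_undef h] at hnorm
    norm_num at hnorm
  have key : ∀ z, W z * Real.log (W z)
      ≤ Real.pi * (W z) ^ 2 - (1 + Real.log Real.pi) * W z := by
    intro z
    rcases eq_or_lt_of_le (hpos z) with h0 | h0
    · simp [← h0]
    · have hπW : 0 < Real.pi * W z := mul_pos Real.pi_pos h0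
      have hlog1 : Real.log (Real.pi * W z) ≤ Real.pi * W z - 1 :=
        Real.log_le_sub_one_of_pos hπW
      rw [Real.log_mul (ne_of_gt Real.pi_pos) (ne_of_gt h0)] at hlog1
      have : Real.log (W z) ≤ Real.pi * W z - 1 - Real.log Real.pi := by linarith
      have := mul_le_mul_of_nonneg_left this (hpos z)
      nlinarith [this]
  have hint : Integrable (fun z => Real.pi * (W z) ^ 2 - (1 + Real.log Real.pi) * W z) :=
    (hsq.const_mul _).sub (hW.const_mul _)
  have h1 : (∫ z, W z * Real.log (W z))
      ≤ ∫ z, (Real.pi * (W z) ^ 2 - (1 + Real.log Real.pi) * W z) :=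
    integral_mono hlog hint key
  rw [integral_sub (hsq.const_mul _) (hW.const_mul _), integral_const_mul,
    integral_const_mul, hnorm] at h1
  linarith
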